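/- Let V be a finite vocabulary partitioned into two classes c1 and c2, U : V → ℝ^d an unembedding map, T0 ∈ ℝ^d an initial hidden state, and ℓ ∈ ℝ^d a vector satisfying ⟨U(v), ℓ⟩ = p for all v ∈ c1 and ⟨U(v'), ℓ⟩ = p − d for all v' ∈ c2, with d > 0. Define the softmax next-token probability at hidden state h as Pr(v | h) = exp(⟨U(v), h⟩) / Σ_{v'∈V} exp(⟨U(v'), h⟩). Let r = (Σ_{v∈c2} exp(⟨U(v), T0⟩)) / (Σ_{v∈c1} exp(⟨U(v), T0⟩)). Then for any λ ∈ ℝ and h = T0 + λ·ℓ, the total probability of class c2 equals r·exp(−λd) / (1 + r·exp(−λd)). -/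

import Mathlib

/-!
Moving the hidden state along `ℓ` multiplies every `exp ⟪U v, h⟫` of a class by the same factor,
`exp (λ p)` on `c1` and `exp (λ (p - d))` on `c2`. Hence the ratio of the two class masses becomes
`r * exp (-λ d)`, and the mass of `c2` is `ρ / (1 + ρ)` for that ratio `ρ`.
-/

open Finset Real RealInnerProductSpace

lemma sum_exp_inner_add_smul_of_inner_eq {V E : Type*} [NormedAddCommGroup E]
    [InnerProductSpace ℝ E] (U : V → E) (T0 ℓ : E) (s : Finset V) {a : ℝ}
    (ha : ∀ v ∈ s, ⟪U v, ℓ⟫ = a) (lam : ℝ) :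
    ∑ v ∈ s, exp ⟪U v, T0 + lam • ℓ⟫ = (∑ v ∈ s, exp ⟪U v, T0⟫) * exp (lam * a) := by
  rw [sum_mul]
  refine sum_congr rfl fun v hv => ?_
  rw [inner_add_right, real_inner_smul_right, ha v hv, exp_add]

lemma div_add_eq_div_div_one_add_div {a b : ℝ} (ha : a ≠ 0) :
    b / (a + b) = b / a / (1 + b / a) := by
  rw [one_add_div ha, div_div_div_cancel_right₀ ha]

theorem softmax_class_prob_eq_general
    {V : Type*} [Fintype V] [DecidableEq V]
    {E : Type*} [NormedAddCommGroup E] [InnerProductSpace ℝ E]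
    (U : V → E) (T0 ℓ : E) (c1 c2 : Finset V)
    (hpart : c1 ∪ c2 = Finset.univ) (hdisj : Disjoint c1 c2)
    (hc1 : c1.Nonempty)
    (p d : ℝ)
    (h1 : ∀ v ∈ c1, ⟪U v, ℓ⟫ = p)
    (h2 : ∀ v ∈ c2, ⟪U v, ℓ⟫ = p - d)
    (r : ℝ)
    (hr : r = (∑ v ∈ c2, Real.exp ⟪U v, T0⟫) / (∑ v ∈ c1, Real.exp ⟪U v, T0⟫))
    (lam : ℝ) :
    (∑ v ∈ c2, Real.exp ⟪U v, T0 + lam • ℓ⟫) /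
      (∑ v : V, Real.exp ⟪U v, T0 + lam • ℓ⟫)
      = r * Real.exp (-(lam * d)) / (1 + r * Real.exp (-(lam * d))) := by
  have hmass1 : ∑ v ∈ c1, exp ⟪U v, T0 + lam • ℓ⟫ ≠ 0 := (sum_pos (fun v _ => exp_pos _) hc1).ne'
  have hsplit : ∑ v : V, exp ⟪U v, T0 + lam • ℓ⟫ =
      ∑ v ∈ c1, exp ⟪U v, T0 + lam • ℓ⟫ + ∑ v ∈ c2, exp ⟪U v, T0 + lam • ℓ⟫ := by
    rw [← sum_union hdisj, hpart]
  have hratio : (∑ v ∈ c2, exp ⟪U v, T0 + lam • ℓ⟫) / (∑ v ∈ c1, exp ⟪U v, T0 + lam • ℓ⟫) =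
      r * exp (-(lam * d)) := by
    rw [sum_exp_inner_add_smul_of_inner_eq U T0 ℓ c1 h1,
      sum_exp_inner_add_smul_of_inner_eq U T0 ℓ c2 h2, hr, mul_div_mul_comm, ← exp_sub]
    ring_nf
  rw [hsplit, div_add_eq_div_div_one_add_div hmass1, hratio]

theorem softmax_class_prob_eq
    {V : Type*} [Fintype V] [DecidableEq V] [Nonempty V]
    {E : Type*} [NormedAddCommGroup E] [InnerProductSpace ℝ E]
    (U : V → E) (T0 ℓ : E) (c1 c2 : Finset V)
    (hpart : c1 ∪ c2 = Finset.univ) (hdisj : Disjoint c1 c2)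
    (hc1 : c1.Nonempty) (hc2 : c2.Nonempty)
    (p d : ℝ) (hd : 0 < d)
    (h1 : ∀ v ∈ c1, ⟪U v, ℓ⟫ = p)
    (h2 : ∀ v ∈ c2, ⟪U v, ℓ⟫ = p - d)
    (r : ℝ)
    (hr : r = (∑ v ∈ c2, Real.exp ⟪U v, T0⟫) / (∑ v ∈ c1, Real.exp ⟪U v, T0⟫))
    (lam : ℝ) :
    (∑ v ∈ c2, Real.exp ⟪U v, T0 + lam • ℓ⟫) /
      (∑ v : V, Real.exp ⟪U v, T0 + lam • ℓ⟫)
      = r * Real.exp (-(lam * d)) / (1 + r * Real.exp (-(lam * d))) :=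
  softmax_class_prob_eq_general U T0 ℓ c1 c2 hpart hdisj hc1 p d h1 h2 r hr lam
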